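/- Let J be a continuous Jacobian on Ω and let μ₁ be a suitable Borel probability on Ω with continuous IRN J₁. Then μ₃ := L*_{log J}(μ₁) is a suitable Borel probability with continuous IRN J₃ given by J₃(z) = J₁(σ(z))·J(z)/J(σ(z)) for all z ∈ Ω. Moreover, if J and J₁ are Hölder continuous then J₃ is Hölder continuous. -/

import Mathlib

open MeasureTheory

/-- The one-sided shift space `Ω = {1,…,d}^ℕ` on `d` symbols,
with the product topology and product σ-algebra. -/
abbrev Omega (d : ℕ) : Type := ℕ → Fin d

/-- The left shift `σ(x₁,x₂,x₃,…) = (x₂,x₃,…)`. -/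
def shift {d : ℕ} (x : Omega d) : Omega d := fun n => x (n + 1)

/-- Prepend a symbol: `cons a x = ax = (a,x₁,x₂,…)`. -/
def cons {d : ℕ} (a : Fin d) (x : Omega d) : Omega d := fun n =>
  match n with
  | 0 => a
  | Nat.succ k => x k

/-- Hölder continuity with respect to the metric
`d(x,y) = 2^{-min{ j : x_j ≠ y_j}}` on `Ω`: there are `C` and `α > 0` such that
whenever `x` and `y` agree on their first `n` coordinates (so `d(x,y) ≤ 2⁻ⁿ`),
`|f x - f y| ≤ C * (2⁻ⁿ)^α`. -/
def IsHolder {d : ℕ} (f : Omega d → ℝ) : Prop :=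
  Continuous f ∧ ∃ C α : ℝ, 0 < α ∧ ∀ (x y : Omega d) (n : ℕ),
    (∀ k < n, x k = y k) → |f x - f y| ≤ C * ((2 : ℝ)⁻¹ ^ n) ^ α

/-- `μ` is a suitable probability with IRN (inverse Radon–Nikodym derivative
along injective branches) `J`: the function `J` is continuous and strictly
positive, and for every symbol `j` and continuous `φ`,
`∫ φ(jx) J(jx) dμ(x) = ∫_{[j]} φ dμ` where `[j] = {x | x₁ = j}`. -/
structure IsSuitable {d : ℕ} (μ : Measure (Omega d)) (J : Omega d → ℝ) : Prop where
  cont : Continuous J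
  pos : ∀ x, 0 < J x
  irn : ∀ (j : Fin d) (φ : Omega d → ℝ), Continuous φ →
    ∫ x, φ (cons j x) * J (cons j x) ∂μ = ∫ x in {x : Omega d | x 0 = j}, φ x ∂μ

/-- `J` is a Jacobian: continuous, strictly positive, and `Σ_a J(ax) = 1`. -/
def IsJacobian {d : ℕ} (J : Omega d → ℝ) : Prop :=
  Continuous J ∧ (∀ x, 0 < J x) ∧ ∀ x : Omega d, ∑ a : Fin d, J (cons a x) = 1

/-- `ν = L*_{log J}(μ)`, the image of `μ` under the dual of the Ruelle operator
of the potential `log J` (note `e^{log J(ax)} = J(ax)`): for every continuous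
`φ`, `∫ φ dν = ∫ L_{log J}φ dμ = ∫ Σ_a J(ax) φ(ax) dμ(x)`. -/
def IsDualRuelle {d : ℕ} (J : Omega d → ℝ) (μ ν : Measure (Omega d)) : Prop :=
  ∀ φ : Omega d → ℝ, Continuous φ →
    ∫ x, φ x ∂ν = ∫ x, ∑ a : Fin d, J (cons a x) * φ (cons a x) ∂μ

/-- `μ` is σ-invariant: `∫ φ∘σ dμ = ∫ φ dμ` for all continuous `φ`. -/
def IsShiftInvariant {d : ℕ} (μ : Measure (Omega d)) : Prop :=
  ∀ φ : Omega d → ℝ, Continuous φ → ∫ x, φ (shift x) ∂μ = ∫ x, φ x ∂μ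

/-- KL divergence `D_KL(μ₁,μ₂) = ∫ (log J₁ − log J₂) dμ₁` of suitable
probabilities, expressed via their IRNs `J₁`, `J₂`. -/
noncomputable def Dkl {d : ℕ} (μ₁ : Measure (Omega d)) (J₁ J₂ : Omega d → ℝ) : ℝ :=
  ∫ x, (Real.log (J₁ x) - Real.log (J₂ x)) ∂μ₁

/-! Testing `μ₃ = L*_{log J} μ₁` against `φ(j·) J₃(j·)` evaluates `J₃` at points `j a x`, where
`J₃(jax) = J₁(ax) J(jax) / J(ax)`: the Ruelle weight `J(ax)` cancels the denominator, leaving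
`∫ Σ_a χ(ax) J₁(ax) dμ₁` with `χ = J(j·) φ(j·)`. Summing the IRN identity of `μ₁` over the
cylinders `[a]` turns this into `∫ χ dμ₁`, and testing `μ₃` against the continuous function
`1_{[j]} φ` (cylinders are clopen) shows that this is `∫_{[j]} φ dμ₃`.
Hölder continuity of `J₃` holds because Hölder functions on the compact space `Ω` are stable under
precomposition with `σ` (which at most doubles distances), products, and inverses of positive
functions. -/

section

variable {d : ℕ}

@[simp]
lemma shift_cons (a : Fin d) (x : Omega d) : shift (cons a x) = x := rfl

lemma continuous_shift : Continuous (shift : Omega d → Omega d) :=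
  continuous_pi fun n => continuous_apply (n + 1)

lemma continuous_cons (a : Fin d) : Continuous (cons a : Omega d → Omega d) :=
  continuous_pi fun n => by
    cases n with
    | zero => exact continuous_const
    | succ k => exact continuous_apply k

lemma isClopen_cylinder (j : Fin d) : IsClopen {x : Omega d | x 0 = j} :=
  (isClopen_discrete {j}).preimage (continuous_apply 0)

lemma measurableSet_cylinder (j : Fin d) : MeasurableSet {x : Omega d | x 0 = j} :=
  measurableSet_singleton j |>.preimage (measurable_pi_apply 0)

lemma integral_eq_sum_setIntegral_cylinder {μ : Measure (Omega d)} {f : Omega d → ℝ}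
    (hf : Integrable f μ) :
    ∫ x, f x ∂μ = ∑ j : Fin d, ∫ x in {x : Omega d | x 0 = j}, f x ∂μ := by
  have hcover : (⋃ j : Fin d, {x : Omega d | x 0 = j}) = Set.univ :=
    Set.iUnion_eq_univ_iff.2 fun x => ⟨x 0, rfl⟩
  rw [← setIntegral_univ, ← hcover]
  exact integral_iUnion_fintype measurableSet_cylinder
    (pairwise_disjoint_fiber (fun x : Omega d => x 0)) fun _ => hf.integrableOn

/-- `μ` is a fixed point of `L*_{log J}`. -/
lemma IsSuitable.integral_sum_cons {μ : Measure (Omega d)} [IsFiniteMeasure μ]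
    {J : Omega d → ℝ} (hμ : IsSuitable μ J) {χ : Omega d → ℝ} (hχ : Continuous χ) :
    ∫ x, ∑ a : Fin d, χ (cons a x) * J (cons a x) ∂μ = ∫ x, χ x ∂μ := by
  have hint {g : Omega d → ℝ} (hg : Continuous g) : Integrable g μ :=
    hg.integrable_of_hasCompactSupport (.of_compactSpace g)
  rw [integral_finsetSum (f := fun a x => χ (cons a x) * J (cons a x)) _ fun a _ =>
      hint ((hχ.comp (continuous_cons a)).mul (hμ.cont.comp (continuous_cons a))),
    integral_eq_sum_setIntegral_cylinder (hint hχ)]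
  exact Finset.sum_congr rfl fun a _ => hμ.irn a χ hχ

lemma IsDualRuelle.setIntegral_cylinder {J : Omega d → ℝ} {μ ν : Measure (Omega d)}
    (h : IsDualRuelle J μ ν) (j : Fin d) {φ : Omega d → ℝ} (hφ : Continuous φ) :
    ∫ x in {x : Omega d | x 0 = j}, φ x ∂ν = ∫ x, J (cons j x) * φ (cons j x) ∂μ := by
  have hind : Continuous ({x : Omega d | x 0 = j}.indicator φ) :=
    (isClopen_cylinder j).continuous_indicator hφ
  rw [← integral_indicator (measurableSet_cylinder j), h _ hind]
  congr 1 with x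
  rw [Finset.sum_eq_single_of_mem j (Finset.mem_univ j) fun a _ ha => by
      rw [Set.indicator_of_notMem (show cons a x ∉ {y : Omega d | y 0 = j} from ha), mul_zero],
    Set.indicator_of_mem (show cons j x ∈ {y : Omega d | y 0 = j} from rfl)]

lemma IsSuitable.of_isDualRuelle {J J₁ : Omega d → ℝ} {μ₁ μ₃ : Measure (Omega d)}
    [IsFiniteMeasure μ₁] (hJc : Continuous J) (hJpos : ∀ x, 0 < J x)
    (h₁ : IsSuitable μ₁ J₁) (hμ₃ : IsDualRuelle J μ₁ μ₃) :
    IsSuitable μ₃ fun z => J₁ (shift z) * J z / J (shift z) := by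
  set J₃ : Omega d → ℝ := fun z => J₁ (shift z) * J z / J (shift z)
  have hJ₃c : Continuous J₃ :=
    ((h₁.cont.comp continuous_shift).mul hJc).div (hJc.comp continuous_shift)
      fun z => (hJpos _).ne'
  refine ⟨hJ₃c, fun z => div_pos (mul_pos (h₁.pos _) (hJpos z)) (hJpos _), fun j φ hφ => ?_⟩
  set χ : Omega d → ℝ := fun y => J (cons j y) * φ (cons j y)
  have hχ : Continuous χ := (hJc.comp (continuous_cons j)).mul (hφ.comp (continuous_cons j))
  calc ∫ x, φ (cons j x) * J₃ (cons j x) ∂μ₃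
      = ∫ x, ∑ a : Fin d, J (cons a x) * (φ (cons j (cons a x)) * J₃ (cons j (cons a x))) ∂μ₁ :=
        hμ₃ _ ((hφ.comp (continuous_cons j)).mul (hJ₃c.comp (continuous_cons j)))
    _ = ∫ x, ∑ a : Fin d, χ (cons a x) * J₁ (cons a x) ∂μ₁ := by
        congr 1 with x
        refine Finset.sum_congr rfl fun a _ => ?_
        have hJa : J (cons a x) ≠ 0 := (hJpos _).ne'
        simp only [J₃, χ, shift_cons]
        field_simp
    _ = ∫ x, χ x ∂μ₁ := h₁.integral_sum_cons hχ
    _ = ∫ x in {x : Omega d | x 0 = j}, φ x ∂μ₃ := (hμ₃.setIntegral_cylinder j hφ).symm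

lemma exists_abs_le_of_continuous {X : Type*} [TopologicalSpace X] [CompactSpace X] {f : X → ℝ}
    (hf : Continuous f) :
    ∃ M, ∀ x, |f x| ≤ M := by
  obtain ⟨M, hM⟩ := isCompact_univ.exists_bound_of_continuousOn hf.continuousOn
  exact ⟨M, fun x => hM x (Set.mem_univ x)⟩

lemma exists_pos_le_of_continuous {X : Type*} [TopologicalSpace X] [CompactSpace X] {f : X → ℝ}
    (hf : Continuous f) (hpos : ∀ x, 0 < f x) :
    ∃ m, 0 < m ∧ ∀ x, m ≤ f x := by
  obtain ⟨m, hm, hmf⟩ := isCompact_univ.exists_forall_le' hf.continuousOn fun x _ => hpos x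
  exact ⟨m, hm, fun x => hmf x (Set.mem_univ x)⟩

lemma nonneg_of_holder_bound {f : Omega d → ℝ} {C α : ℝ}
    (H : ∀ (x y : Omega d) (n : ℕ), (∀ k < n, x k = y k) → |f x - f y| ≤ C * ((2 : ℝ)⁻¹ ^ n) ^ α)
    (x : Omega d) : 0 ≤ C := by
  simpa using H x x 0 fun k hk => absurd hk k.not_lt_zero

namespace IsHolder

variable {f g : Omega d → ℝ}

lemma comp_shift (hf : IsHolder f) : IsHolder fun x => f (shift x) := by
  obtain ⟨hc, C, α, hα, H⟩ := hf
  refine ⟨hc.comp continuous_shift, C * 2 ^ α, α, hα, fun x y n hxy => ?_⟩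
  have hagree : ∀ k < n - 1, shift x k = shift y k := fun k hk => hxy (k + 1) (by omega)
  have hscale : ((2 : ℝ)⁻¹ ^ (n - 1)) ^ α ≤ 2 ^ α * ((2 : ℝ)⁻¹ ^ n) ^ α := by
    rw [← Real.mul_rpow (by norm_num) (by positivity)]
    gcongr
    rcases n with _ | n
    · norm_num
    · rw [pow_succ, Nat.add_sub_cancel, mul_left_comm, mul_inv_cancel₀ two_ne_zero, mul_one]
  calc |f (shift x) - f (shift y)| ≤ C * ((2 : ℝ)⁻¹ ^ (n - 1)) ^ α := H _ _ _ hagree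
    _ ≤ C * (2 ^ α * ((2 : ℝ)⁻¹ ^ n) ^ α) := by gcongr; exact nonneg_of_holder_bound H x
    _ = C * 2 ^ α * ((2 : ℝ)⁻¹ ^ n) ^ α := by ring

lemma mul (hf : IsHolder f) (hg : IsHolder g) : IsHolder fun x => f x * g x := by
  obtain ⟨hfc, C₁, α₁, hα₁, H₁⟩ := hf
  obtain ⟨hgc, C₂, α₂, hα₂, H₂⟩ := hg
  obtain ⟨Mf, hMf⟩ := exists_abs_le_of_continuous hfc
  obtain ⟨Mg, hMg⟩ := exists_abs_le_of_continuous hgc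
  refine ⟨hfc.mul hgc, Mf * C₂ + Mg * C₁, min α₁ α₂, lt_min hα₁ hα₂, fun x y n hxy => ?_⟩
  set r : ℝ := (2 : ℝ)⁻¹ ^ n
  have hr₀ : 0 < r := by positivity
  have hr₁ : r ≤ 1 := pow_le_one₀ (by norm_num) (by norm_num)
  have hMf₀ : 0 ≤ Mf := (abs_nonneg _).trans (hMf x)
  have hMg₀ : 0 ≤ Mg := (abs_nonneg _).trans (hMg x)
  have hC₁ := nonneg_of_holder_bound H₁ x
  have hC₂ := nonneg_of_holder_bound H₂ x
  calc |f x * g x - f y * g y| = |f x * (g x - g y) + g y * (f x - f y)| := by ring_nf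
    _ ≤ |f x| * |g x - g y| + |g y| * |f x - f y| := by
        rw [← abs_mul, ← abs_mul]; exact abs_add_le _ _
    _ ≤ Mf * (C₂ * r ^ α₂) + Mg * (C₁ * r ^ α₁) := by
        gcongr
        exacts [hMf x, H₂ x y n hxy, hMg y, H₁ x y n hxy]
    _ ≤ Mf * (C₂ * r ^ min α₁ α₂) + Mg * (C₁ * r ^ min α₁ α₂) := by
        gcongr Mf * (C₂ * ?_) + Mg * (C₁ * ?_)
        exacts [Real.rpow_le_rpow_of_exponent_ge hr₀ hr₁ (min_le_right _ _),
          Real.rpow_le_rpow_of_exponent_ge hr₀ hr₁ (min_le_left _ _)]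
    _ = (Mf * C₂ + Mg * C₁) * r ^ min α₁ α₂ := by ring

lemma inv (hf : IsHolder f) (hpos : ∀ x, 0 < f x) : IsHolder fun x => (f x)⁻¹ := by
  obtain ⟨hfc, C, α, hα, H⟩ := hf
  obtain ⟨m, hm, hmf⟩ := exists_pos_le_of_continuous hfc hpos
  refine ⟨hfc.inv₀ fun x => (hpos x).ne', C / (m * m), α, hα, fun x y n hxy => ?_⟩
  have hC := nonneg_of_holder_bound H x
  have hprod : m * m ≤ |f x * f y| := by
    rw [abs_of_pos (mul_pos (hpos x) (hpos y))]
    exact mul_le_mul (hmf x) (hmf y) hm.le (hpos x).le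
  calc |(f x)⁻¹ - (f y)⁻¹| = |f x - f y| / |f x * f y| := by
        rw [inv_sub_inv (hpos x).ne' (hpos y).ne', abs_div, abs_sub_comm, mul_comm]
    _ ≤ C * ((2 : ℝ)⁻¹ ^ n) ^ α / (m * m) := by
        gcongr
        exact H x y n hxy
    _ = C / (m * m) * ((2 : ℝ)⁻¹ ^ n) ^ α := by ring

lemma div (hf : IsHolder f) (hg : IsHolder g) (hpos : ∀ x, 0 < g x) :
    IsHolder fun x => f x / g x := by
  simpa only [div_eq_mul_inv] using hf.mul (hg.inv hpos)

end IsHolder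

end

theorem dual_ruelle_suitable_general
    (d : ℕ) (J J₁ J₃ : Omega d → ℝ)
    (μ₁ μ₃ : Measure (Omega d))
    [IsProbabilityMeasure μ₁]
    (hJ : IsJacobian J) (h₁ : IsSuitable μ₁ J₁)
    (hμ₃ : IsDualRuelle J μ₁ μ₃)
    (hJ₃ : ∀ z, J₃ z = J₁ (shift z) * J z / J (shift z)) :
    IsSuitable μ₃ J₃ ∧ (IsHolder J → IsHolder J₁ → IsHolder J₃) := by
  obtain ⟨hJc, hJpos, -⟩ := hJ
  obtain rfl : J₃ = fun z => J₁ (shift z) * J z / J (shift z) := funext hJ₃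
  exact ⟨h₁.of_isDualRuelle hJc hJpos hμ₃,
    fun hJH h₁H => (h₁H.comp_shift.mul hJH).div hJH.comp_shift fun x => hJpos (shift x)⟩

/-- if `J` is a continuous Jacobian and `μ₁` is suitable with
continuous IRN `J₁`, then `μ₃ = L*_{log J}(μ₁)` is suitable with continuous
IRN `J₃(z) = J₁(σz)·J(z)/J(σz)`; moreover if `J` and `J₁` are Hölder then so
is `J₃`. -/
theorem dual_ruelle_suitable
    (d : ℕ) (hd : 2 ≤ d) (J J₁ J₃ : Omega d → ℝ)
    (μ₁ μ₃ : Measure (Omega d))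
    [IsProbabilityMeasure μ₁] [IsProbabilityMeasure μ₃]
    (hJ : IsJacobian J) (h₁ : IsSuitable μ₁ J₁)
    (hμ₃ : IsDualRuelle J μ₁ μ₃)
    (hJ₃ : ∀ z, J₃ z = J₁ (shift z) * J z / J (shift z)) :
    IsSuitable μ₃ J₃ ∧ (IsHolder J → IsHolder J₁ → IsHolder J₃) :=
  dual_ruelle_suitable_general d J J₁ J₃ μ₁ μ₃ hJ h₁ hμ₃ hJ₃
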